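/- With the notation of the birth-death chain with threshold ℓ (birth rate Λ, death rate μ̂ for states ≤ ℓ, death rate μ̂+μ_k for states > ℓ, with 0 < Λ < μ̂, μ_k > 0), the total stationary mass of the passive states, S(ℓ) := Σ_{i=0}^{ℓ} π^ℓ(i), is a strictly increasing function of the threshold ℓ ∈ ℕ. -/

import Mathlib

/-!
Writing `r = Λ/μ̂` and `q = Λ/(μ̂+μ_k)`, the passive states carry mass `π(0)·A_ℓ` with
`A_ℓ = ∑_{i ≤ ℓ} rⁱ`, and the active tail is geometric with mass `π(0)·r^ℓ·q/(1-q)`.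
Normalising gives `S(ℓ) = A_ℓ / (A_ℓ + c·r^ℓ)` with `c = q/(1-q) > 0`, and since
`A_{ℓ+1} = r·A_ℓ + 1`, cross-multiplying `S(ℓ) < S(ℓ+1)` reduces to `0 < c·r^ℓ`.
-/

open Finset

section GeometricTail

variable {f : ℕ → ℝ} {r q : ℝ} {ℓ : ℕ}

theorem tsum_nat_add_eq_of_geometric_tail (hq0 : 0 ≤ q) (hq1 : q < 1)
    (htail : ∀ i, ℓ < i → f i = f 0 * r ^ ℓ * q ^ (i - ℓ)) :
    ∑' i, f (i + (ℓ + 1)) = f 0 * r ^ ℓ * (q / (1 - q)) := by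
  have hshift : ∀ i, f (i + (ℓ + 1)) = f 0 * r ^ ℓ * q * q ^ i := by
    intro i
    rw [htail _ (by omega), show i + (ℓ + 1) - ℓ = i + 1 by omega, pow_succ]
    ring
  rw [tsum_congr hshift, tsum_mul_left, tsum_geometric_of_lt_one hq0 hq1]
  ring

theorem sum_range_succ_eq_div_of_geometric_tail (hq0 : 0 ≤ q) (hq1 : q < 1)
    (hhead : ∀ i ≤ ℓ, f i = f 0 * r ^ i)
    (htail : ∀ i, ℓ < i → f i = f 0 * r ^ ℓ * q ^ (i - ℓ))
    (hf : Summable f) (htot : ∑' i, f i = 1) :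
    ∑ i ∈ range (ℓ + 1), f i =
      (∑ i ∈ range (ℓ + 1), r ^ i) / (∑ i ∈ range (ℓ + 1), r ^ i + q / (1 - q) * r ^ ℓ) := by
  have hhead_sum : ∑ i ∈ range (ℓ + 1), f i = f 0 * ∑ i ∈ range (ℓ + 1), r ^ i := by
    rw [mul_sum]
    exact sum_congr rfl fun i hi => hhead i (Nat.lt_succ_iff.mp (mem_range.mp hi))
  have hsplit := hf.sum_add_tsum_nat_add (ℓ + 1)
  rw [htot, hhead_sum, tsum_nat_add_eq_of_geometric_tail hq0 hq1 htail] at hsplit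
  have hnorm : f 0 * (∑ i ∈ range (ℓ + 1), r ^ i + q / (1 - q) * r ^ ℓ) = 1 := by
    linear_combination hsplit
  rw [hhead_sum, eq_div_iff (right_ne_zero_of_mul_eq_one hnorm)]
  linear_combination (∑ i ∈ range (ℓ + 1), r ^ i) * hnorm

end GeometricTail

theorem strictMono_geom_sum_div_geom_sum_add {r c : ℝ} (hr : 0 < r) (hc : 0 < c) :
    StrictMono fun ℓ : ℕ =>
      (∑ i ∈ range (ℓ + 1), r ^ i) / (∑ i ∈ range (ℓ + 1), r ^ i + c * r ^ ℓ) := by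
  refine strictMono_nat_of_lt_succ fun ℓ => ?_
  set A := ∑ i ∈ range (ℓ + 1), r ^ i
  have hA : 0 < A := geom_sum_pos hr.le (Nat.succ_ne_zero ℓ)
  have hsucc : ∑ i ∈ range (ℓ + 1 + 1), r ^ i = r * A + 1 := geom_sum_succ
  have hgap : 0 < c * r ^ ℓ := by positivity
  rw [hsucc, div_lt_div_iff₀ (by positivity) (by positivity), pow_succ]
  linear_combination hgap

/-- The total stationary mass of the passive states {0,...,ℓ} of the
threshold-ℓ birth-death chain is strictly increasing in the threshold ℓ. -/
theorem stmt1 (Λ μhat μk : ℝ) (hΛ : 0 < Λ) (hΛμ : Λ < μhat) (hμk : 0 < μk)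
    (π : ℕ → ℕ → ℝ)
    (hform1 : ∀ ℓ i, i ≤ ℓ → π ℓ i = π ℓ 0 * (Λ / μhat) ^ i)
    (hform2 : ∀ ℓ i, ℓ < i → π ℓ i = π ℓ 0 * (Λ / μhat) ^ ℓ * (Λ / (μhat + μk)) ^ (i - ℓ))
    (hsum : ∀ ℓ, Summable (π ℓ)) (htot : ∀ ℓ, ∑' i, π ℓ i = 1) :
    StrictMono (fun ℓ => ∑ i ∈ Finset.range (ℓ + 1), π ℓ i) := by
  have hμ : 0 < μhat := hΛ.trans hΛμ
  have hr : 0 < Λ / μhat := div_pos hΛ hμ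
  have hq0 : 0 < Λ / (μhat + μk) := div_pos hΛ (by positivity)
  have hq1 : Λ / (μhat + μk) < 1 := (div_lt_one (by positivity)).mpr (by linarith)
  have hc : 0 < Λ / (μhat + μk) / (1 - Λ / (μhat + μk)) := div_pos hq0 (sub_pos.mpr hq1)
  have hmass := fun ℓ => sum_range_succ_eq_div_of_geometric_tail hq0.le hq1
    (hform1 ℓ) (hform2 ℓ) (hsum ℓ) (htot ℓ)
  simp only [hmass]
  exact strictMono_geom_sum_div_geom_sum_add hr hc
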